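/- arXiv:1810.09175 — 3 statements merged into one kernel-verified Lean document; each statement's English description precedes it below -/
import Mathlib

section
/- Let p be a prime and let C be a linearly closed clonoid on Z_p. Then there exists a p-minor subset M of ℕ₀ such that C = 𝒞(M) (i.e., the map 𝒞 is surjective onto the linearly closed clonoids on Z_p). -/
/-!
Let `M` be the set of those `d` for which `C` contains every product `x_{τ 1} ⋯ x_{τ d}` of `d`
variables, repetitions allowed. As `x ^ p = x` on `ZMod p`, `M` is `p`-minor.

Members of `C` of a fixed arity form a vector space closed under linear substitutions. Scaling the
variables of `f ∈ C` by `b` and averaging over `b` against weights dual to `β ↦ β ^ t`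
(`t ≤ p - 1`) isolates each monomial of the reduced polynomial of `f`. A reduced monomial in which a
variable `x` occurs `k ≥ 2` times becomes, after `x ↦ x + t y` and extraction of the coefficient of
`t`, the monomial with `x ^ k` replaced by `k x ^ (k - 1) y`, and `k ≠ 0` in `ZMod p`. Repeating
this, `C` contains a product of `d` distinct variables, hence, by substitution, every product of
`d` variables. So every monomial of a member of `C` has degree in `M`, and conversely `𝒞(M) ⊆ C`
since `C` is closed under linear combinations.
-/

/-- A finitary operation on `A`: an element of arity `n + 1` (so every arity is `≥ 1`). -/
abbrev Ops (A : Type) := Σ n : ℕ, ((Fin (n + 1) → A) → A)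

/-- The product `E·F` of two sets of finitary operations:
all compositions `f ∘ (g₁, …, gₙ)` with `f ∈ E` and all `gᵢ ∈ F` of a common arity. -/
def OpProd {A : Type} (E F : Set (Ops A)) : Set (Ops A) :=
  { h | ∃ (n m : ℕ) (f : (Fin (n + 1) → A) → A) (g : Fin (n + 1) → (Fin (m + 1) → A) → A),
      (⟨n, f⟩ : Ops A) ∈ E ∧ (∀ i, (⟨m, g i⟩ : Ops A) ∈ F) ∧
      h = ⟨m, fun x => f (fun i => g i x)⟩ }

/-- The set `Lin(Z_p)` of linear operations `(x₁, …, xₙ) ↦ Σ aᵢ xᵢ` on `ZMod p`. -/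
def LinOps (p : ℕ) : Set (Ops (ZMod p)) :=
  { h | ∃ (n : ℕ) (a : Fin (n + 1) → ZMod p), h = ⟨n, fun x => ∑ i, a i * x i⟩ }

/-- A linearly closed clonoid on `ZMod p`. -/
def IsLCC (p : ℕ) (C : Set (Ops (ZMod p))) : Prop :=
  C.Nonempty ∧ OpProd (LinOps p) C ⊆ C ∧ OpProd C (LinOps p) ⊆ C

/-- The sum `D₁ + D₂` of two sets of operations on `ZMod p`. -/
def LCCsum (p : ℕ) (D₁ D₂ : Set (Ops (ZMod p))) : Set (Ops (ZMod p)) :=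
  { h | ∃ (n : ℕ) (f g : (Fin (n + 1) → ZMod p) → ZMod p),
      (⟨n, f⟩ : Ops (ZMod p)) ∈ D₁ ∧ (⟨n, g⟩ : Ops (ZMod p)) ∈ D₂ ∧
      h = ⟨n, fun x => f x + g x⟩ }

/-- The linearly closed clonoid on `ZMod p` generated by a set `F` of operations. -/
def genLC (p : ℕ) (F : Set (Ops (ZMod p))) : Set (Ops (ZMod p)) :=
  ⋂₀ { C | IsLCC p C ∧ F ⊆ C }

/-- A finitely generated linearly closed clonoid on `ZMod p`. -/
def FinGenLCC (p : ℕ) (C : Set (Ops (ZMod p))) : Prop :=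
  ∃ F : Set (Ops (ZMod p)), F.Finite ∧ C = genLC p F

/-- A `p`-minor subset of `ℕ`. -/
def IsPMinor (p : ℕ) (M : Set ℕ) : Prop :=
  ∀ n ∈ M, n > p - 1 → n - (p - 1) ∈ M

/-- A reduced polynomial: every variable exponent is at most `p - 1`. -/
def IsReducedPoly (p : ℕ) (f : MvPolynomial ℕ (ZMod p)) : Prop :=
  ∀ d ∈ f.support, ∀ i, d i ≤ p - 1

/-- The `(n+1)`-ary operation on `ZMod p` induced by a polynomial
(meaningful when all variables of `f` have index `< n + 1`). -/
noncomputable def inducedOp (p n : ℕ) (f : MvPolynomial ℕ (ZMod p)) : (Fin (n + 1) → ZMod p) → ZMod p :=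
  fun x => MvPolynomial.eval (fun i => if h : i < n + 1 then x ⟨i, h⟩ else 0) f

/-- `𝒞(M)`: all constant-zero operations together with all operations induced by a nonzero
reduced polynomial each of whose monomials has total degree in `M`. -/
def CM (p : ℕ) (M : Set ℕ) : Set (Ops (ZMod p)) :=
  { h | ∃ n : ℕ, h = ⟨n, fun _ => 0⟩ } ∪
  { h | ∃ (n : ℕ) (f : MvPolynomial ℕ (ZMod p)), f ≠ 0 ∧ IsReducedPoly p f ∧
      (∀ i ∈ f.vars, i < n + 1) ∧ (∀ d ∈ f.support, (d.sum fun _ e => e) ∈ M) ∧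
      h = ⟨n, inducedOp p n f⟩ }

/-- `𝒫(M)`: polynomials each of whose monomials has total degree in `M` (this includes `0`). -/
def PM (p : ℕ) (M : Set ℕ) : Set (MvPolynomial ℕ (ZMod p)) :=
  { f | ∀ d ∈ f.support, (d.sum fun _ e => e) ∈ M }

/-- The set `L` of linear polynomials `Σ aᵢ xᵢ`. -/
def LinPoly (p : ℕ) : Set (MvPolynomial ℕ (ZMod p)) :=
  { f | ∃ (s : Finset ℕ) (a : ℕ → ZMod p),
      f = ∑ i ∈ s, MvPolynomial.C (a i) * MvPolynomial.X i }

/-- The product `A·B` of two sets of polynomials: substitute members of `B` for the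
variables of a member of `A` (regarded as `n`-ary). -/
def PolyProd (p : ℕ) (A B : Set (MvPolynomial ℕ (ZMod p))) :
    Set (MvPolynomial ℕ (ZMod p)) :=
  { h | ∃ (n : ℕ) (f : MvPolynomial ℕ (ZMod p)) (g : ℕ → MvPolynomial ℕ (ZMod p)),
      f ∈ A ∧ (∀ i ∈ f.vars, i < n) ∧ (∀ i < n, g i ∈ B) ∧ h = MvPolynomial.aeval g f }

/-- A polynomial linearly closed clonoid. -/
def IsPLC (p : ℕ) (C : Set (MvPolynomial ℕ (ZMod p))) : Prop :=
  C.Nonempty ∧ PolyProd p (LinPoly p) C ⊆ C ∧ PolyProd p C (LinPoly p) ⊆ C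

/-- The polynomial linearly closed clonoid generated by `F`. -/
def genPLC (p : ℕ) (F : Set (MvPolynomial ℕ (ZMod p))) : Set (MvPolynomial ℕ (ZMod p)) :=
  ⋂₀ { C | IsPLC p C ∧ F ⊆ C }

/-- A clone on `A`: contains all projections and is closed under composition. -/
def IsClone {A : Type} (C : Set (Ops A)) : Prop :=
  (∀ (n : ℕ) (j : Fin (n + 1)), (⟨n, fun x => x j⟩ : Ops A) ∈ C) ∧ OpProd C C ⊆ C

/-- The clone generated by a set of operations. -/
def cloneGen {A : Type} (F : Set (Ops A)) : Set (Ops A) :=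
  ⋂₀ { C | IsClone C ∧ F ⊆ C }

/-- A finitely generated clone. -/
def FinGenClone {A : Type} (C : Set (Ops A)) : Prop :=
  ∃ F : Set (Ops A), F.Finite ∧ C = cloneGen F

/-- The binary addition operation, as a finitary operation. -/
def plusOp (A : Type) [Add A] : Ops A := ⟨1, fun x => x 0 + x 1⟩

/-- The set of all projections. -/
def ProjOps (A : Type) : Set (Ops A) :=
  { h | ∃ (n : ℕ) (j : Fin (n + 1)), h = ⟨n, fun x => x j⟩ }

/-- A linearly closed iterative algebra on `ZMod p`. -/
def IsLCIA (p : ℕ) (C : Set (Ops (ZMod p))) : Prop :=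
  IsLCC p C ∧ OpProd C (C ∪ ProjOps (ZMod p)) ⊆ C

/-- The clone `Aff(Z_p)` of affine operations `(x₁, …, xₙ) ↦ c + Σ aᵢ xᵢ`. -/
def AffOps (p : ℕ) : Set (Ops (ZMod p)) :=
  { h | ∃ (n : ℕ) (c : ZMod p) (a : Fin (n + 1) → ZMod p),
      h = ⟨n, fun x => c + ∑ i, a i * x i⟩ }

/-- An operation preserves an automorphism `π` of `(ZMod p, +)`. -/
def PreservesAut {p : ℕ} (h : Ops (ZMod p)) (π : AddAut (ZMod p)) : Prop :=
  ∀ x : Fin (h.1 + 1) → ZMod p, h.2 (fun i => π (x i)) = π (h.2 x)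

/-- An operation preserves the unary relation `{0}`. -/
def Preserves0 {p : ℕ} (h : Ops (ZMod p)) : Prop :=
  h.2 (fun _ => 0) = 0

/-- The embedding `φ` of linearly closed clonoids on `ZMod p` into sets of operations
on `ZMod p × ZMod p`. -/
def phiMap (p : ℕ) (C : Set (Ops (ZMod p))) : Set (Ops (ZMod p × ZMod p)) :=
  { h | ∃ (n : ℕ) (l₁ l₂ f : (Fin (n + 1) → ZMod p) → ZMod p),
      (⟨n, l₁⟩ : Ops (ZMod p)) ∈ LinOps p ∧ (⟨n, l₂⟩ : Ops (ZMod p)) ∈ LinOps p ∧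
      (⟨n, f⟩ : Ops (ZMod p)) ∈ C ∧
      h = ⟨n, fun x => (l₁ (fun i => (x i).1) + f (fun i => (x i).2),
                        l₂ (fun i => (x i).2))⟩ }

open MvPolynomial Finset

theorem Ops.mk_mem_of_eq {A : Type} {C : Set (Ops A)} {n : ℕ} {f g : (Fin (n + 1) → A) → A}
    (hf : (⟨n, f⟩ : Ops A) ∈ C) (h : ∀ x, f x = g x) : (⟨n, g⟩ : Ops A) ∈ C :=
  funext h ▸ hf

namespace IsLCC

variable {p : ℕ} {C : Set (Ops (ZMod p))}

theorem comp_linearMap (hC : IsLCC p C) {n m : ℕ} {f : (Fin (n + 1) → ZMod p) → ZMod p}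
    (hf : (⟨n, f⟩ : Ops (ZMod p)) ∈ C)
    (L : (Fin (m + 1) → ZMod p) →ₗ[ZMod p] Fin (n + 1) → ZMod p) :
    (⟨m, fun x => f (L x)⟩ : Ops (ZMod p)) ∈ C := by
  refine hC.2.2 ⟨n, m, f, fun i x => L x i, hf, fun i =>
    ⟨m, fun j => L (fun k => if j = k then 1 else 0) i, ?_⟩, rfl⟩
  refine congrArg (Sigma.mk m) (funext fun x => ?_)
  change L x i = _
  rw [LinearMap.pi_apply_eq_sum_univ L x]
  simp [mul_comm]

theorem comp_map (hC : IsLCC p C) {n m : ℕ} {f : (Fin (n + 1) → ZMod p) → ZMod p}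
    (hf : (⟨n, f⟩ : Ops (ZMod p)) ∈ C) (g : Fin (n + 1) → Fin (m + 1)) :
    (⟨m, fun x => f (x ∘ g)⟩ : Ops (ZMod p)) ∈ C :=
  hC.comp_linearMap hf (LinearMap.funLeft (ZMod p) (ZMod p) g)

theorem add_mem (hC : IsLCC p C) {n : ℕ} {f g : (Fin (n + 1) → ZMod p) → ZMod p}
    (hf : (⟨n, f⟩ : Ops (ZMod p)) ∈ C) (hg : (⟨n, g⟩ : Ops (ZMod p)) ∈ C) :
    (⟨n, f + g⟩ : Ops (ZMod p)) ∈ C := by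
  refine Ops.mk_mem_of_eq (hC.2.1 ⟨1, n, _, ![f, g], ⟨1, fun _ => 1, rfl⟩,
    Fin.forall_fin_two.2 ⟨hf, hg⟩, rfl⟩) fun x => ?_
  simp [Fin.sum_univ_two]

theorem smul_mem (hC : IsLCC p C) {n : ℕ} {f : (Fin (n + 1) → ZMod p) → ZMod p}
    (hf : (⟨n, f⟩ : Ops (ZMod p)) ∈ C) (c : ZMod p) :
    (⟨n, c • f⟩ : Ops (ZMod p)) ∈ C := by
  refine Ops.mk_mem_of_eq (hC.2.1 ⟨0, n, _, fun _ => f, ⟨0, fun _ => c, rfl⟩,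
    fun _ => hf, rfl⟩) fun x => ?_
  simp

theorem zero_mem (hC : IsLCC p C) (n : ℕ) : (⟨n, 0⟩ : Ops (ZMod p)) ∈ C := by
  obtain ⟨⟨k, f⟩, hf⟩ := hC.1
  refine Ops.mk_mem_of_eq (hC.smul_mem (hC.comp_map hf fun _ => (0 : Fin (n + 1))) 0) ?_
  simp

def nAry (hC : IsLCC p C) (n : ℕ) : Submodule (ZMod p) ((Fin (n + 1) → ZMod p) → ZMod p) where
  carrier := {f | (⟨n, f⟩ : Ops (ZMod p)) ∈ C}
  add_mem' := hC.add_mem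
  zero_mem' := hC.zero_mem n
  smul_mem' c _ hf := hC.smul_mem hf c

end IsLCC

section DualWeights

variable {p : ℕ} [Fact p.Prime]

theorem ZMod.sum_pow_of_ne_zero {a : ℕ} (ha : a ≠ 0) :
    ∑ β : ZMod p, β ^ a = if p - 1 ∣ a then -1 else 0 := by
  classical
  have hunits := FiniteField.sum_pow_units (ZMod p) a
  rw [ZMod.card] at hunits
  rw [← hunits,
    ← Finset.sum_filter_of_ne (p := (· ≠ 0)) fun β _ h => by rintro rfl; simp [ha] at h,
    Finset.sum_subtype _ (p := (· ≠ 0)) (fun _ => by simp) (fun β => β ^ a)]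
  exact (Fintype.sum_equiv (unitsEquivNeZero (G₀ := ZMod p)) _ _ fun _ => rfl).symm

def dualWeight (p s : ℕ) (β : ZMod p) : ZMod p :=
  if s = 0 then (if β = 0 then 1 else 0) else -β ^ (p - 1 - s)

theorem sum_dualWeight_mul_pow {s t : ℕ} (hs : s ≤ p - 1) (ht : t ≤ p - 1) :
    ∑ β : ZMod p, dualWeight p s β * β ^ t = if t = s then 1 else 0 := by
  rcases Nat.eq_zero_or_pos s with rfl | hs0
  · simp [dualWeight, zero_pow_eq]
  have hsum : ∑ β : ZMod p, dualWeight p s β * β ^ t = -∑ β : ZMod p, β ^ (p - 1 - s + t) := by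
    simp [dualWeight, hs0.ne', pow_add]
  rw [hsum]
  rcases Nat.eq_zero_or_pos (p - 1 - s + t) with h0 | ha
  · rw [h0, if_neg (by omega)]
    simp
  have hdvd : p - 1 ∣ p - 1 - s + t ↔ t = s :=
    ⟨fun h => by have := Nat.eq_of_dvd_of_lt_two_mul ha.ne' h (by omega); omega,
      by rintro rfl; exact ⟨1, by omega⟩⟩
  rw [ZMod.sum_pow_of_ne_zero ha.ne']
  by_cases h : t = s
  · rw [if_pos (hdvd.2 h), if_pos h, neg_neg]
  · simp [h, hdvd]

theorem sum_dualWeight_one_mul_add_pow {k : ℕ} (hk : k ≤ p - 1) (a y : ZMod p) :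
    ∑ t : ZMod p, dualWeight p 1 t * (a + t * y) ^ k = k * a ^ (k - 1) * y := by
  have hp := (Fact.out : p.Prime).two_le
  have hterm : ∀ m ∈ range (k + 1),
      ∑ t : ZMod p, dualWeight p 1 t * ((t * y) ^ m * a ^ (k - m) * k.choose m) =
        if m = 1 then k * a ^ (k - 1) * y else 0 := by
    intro m hm
    simp_rw [mul_pow, ← mul_assoc, ← Finset.sum_mul]
    rw [sum_dualWeight_mul_pow (by omega) ((Nat.lt_succ_iff.1 (mem_range.1 hm)).trans hk)]
    split_ifs with h
    · subst h
      simp only [one_mul, pow_one, Nat.choose_one_right]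
      ring
    · simp
  simp_rw [add_comm a, add_pow, Finset.mul_sum]
  rw [Finset.sum_comm, Finset.sum_congr rfl hterm, Finset.sum_ite_eq']
  split_ifs with h
  · rfl
  · obtain rfl : k = 0 := by simpa using h
    simp

theorem prod_sum_dualWeight_mul_pow {n : ℕ} {e e' : ℕ →₀ ℕ} (he : ∀ i, e i ≤ p - 1)
    (he' : ∀ i, e' i ≤ p - 1) (hsupp : ∀ i ≥ n + 1, e i = 0) (hsupp' : ∀ i ≥ n + 1, e' i = 0) :
    ∏ i : Fin (n + 1), ∑ β : ZMod p, dualWeight p (e i) β * β ^ e' i =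
      if e' = e then 1 else 0 := by
  simp only [sum_dualWeight_mul_pow (he _) (he' _)]
  split_ifs with h
  · simp [h]
  obtain ⟨i, hi⟩ : ∃ i : Fin (n + 1), e' i ≠ e i := by
    by_contra! hall
    refine h (Finsupp.ext fun i => if hi : i < n + 1 then hall ⟨i, hi⟩ else ?_)
    rw [hsupp' i (not_lt.1 hi), hsupp i (not_lt.1 hi)]
  exact Finset.prod_eq_zero (mem_univ i) (if_neg hi)

end DualWeights

@[to_additive]
theorem Finsupp.prod_eq_prod_fin {M : Type*} [CommMonoid M] {n : ℕ} {e : ℕ →₀ ℕ}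
    (he : ∀ i ∈ e.support, i < n + 1) (g : ℕ → ℕ → M) (hg : ∀ i, g i 0 = 1) :
    e.prod g = ∏ i : Fin (n + 1), g i (e i) := by
  rw [Finsupp.prod_of_support_subset e (fun i hi => Finset.mem_range.2 (he i hi)) g
    fun i _ => hg i, Fin.prod_univ_eq_prod_range (fun i => g i (e i))]

section InducedOp

variable {p : ℕ}

theorem inducedOp_eq_sum {n : ℕ} {f : MvPolynomial ℕ (ZMod p)} (hf : ∀ i ∈ f.vars, i < n + 1)
    (x : Fin (n + 1) → ZMod p) :
    inducedOp p n f x = ∑ e ∈ f.support, coeff e f * ∏ i : Fin (n + 1), x i ^ e i := by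
  refine (eval_eq _ f).trans (Finset.sum_congr rfl fun e he => ?_)
  rw [← Finsupp.prod, Finsupp.prod_eq_prod_fin
    (fun i hi => hf i (support_subset_vars_of_mem_support he hi)) _ fun _ => pow_zero _]
  simp only [Fin.is_lt, ↓reduceDIte, Fin.eta]

theorem exists_reduced_inducedOp_eq [Fact p.Prime] (n : ℕ) (g : (Fin (n + 1) → ZMod p) → ZMod p) :
    ∃ f : MvPolynomial ℕ (ZMod p), IsReducedPoly p f ∧ (∀ i ∈ f.vars, i < n + 1) ∧
      inducedOp p n f = g := by
  have hg : g ∈ (restrictDegree (Fin (n + 1)) (ZMod p) (Fintype.card (ZMod p) - 1)).map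
      (evalₗ (ZMod p) (Fin (n + 1))) := by
    rw [map_restrict_dom_evalₗ]; trivial
  obtain ⟨f₀, hf₀, rfl⟩ := Submodule.mem_map.1 hg
  rw [ZMod.card, mem_restrictDegree] at hf₀
  refine ⟨rename Fin.val f₀, fun e he i => ?_, fun i hi => ?_, funext fun x => ?_⟩
  · rw [support_rename_of_injective Fin.val_injective] at he
    obtain ⟨s, hs, rfl⟩ := Finset.mem_image.1 he
    by_cases hi : i < n + 1
    · exact (Finsupp.mapDomain_apply Fin.val_injective s ⟨i, hi⟩).trans_le (hf₀ s hs _)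
    · rw [Finsupp.mapDomain_of_notMem_range _ _ fun ⟨j, hj⟩ => hi (hj ▸ j.2)]
      exact Nat.zero_le _
  · obtain ⟨j, -, rfl⟩ := Finset.mem_image.1 (vars_rename Fin.val f₀ hi)
    exact j.2
  · simp only [inducedOp, eval_rename, evalₗ_apply]
    congr 2
    funext i
    exact dif_pos i.2

end InducedOp

namespace IsLCC

variable {p : ℕ} [Fact p.Prime] {C : Set (Ops (ZMod p))}

/-- Scaling the variables by `b` multiplies the monomial `x ^ e'` by `b ^ e'`; averaging over `b`
against the dual weights of `e` then kills every monomial except `x ^ e`. -/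
theorem monomial_mem (hC : IsLCC p C) {n : ℕ} {f : MvPolynomial ℕ (ZMod p)}
    (hred : IsReducedPoly p f) (hvars : ∀ i ∈ f.vars, i < n + 1)
    (hf : (⟨n, inducedOp p n f⟩ : Ops (ZMod p)) ∈ C) {e : ℕ →₀ ℕ} (he : e ∈ f.support) :
    (⟨n, fun x => ∏ i : Fin (n + 1), x i ^ e i⟩ : Ops (ZMod p)) ∈ C := by
  classical
  have hsupp : ∀ e' ∈ f.support, ∀ i ≥ n + 1, e' i = 0 := fun e' he' i hi =>
    Finsupp.notMem_support_iff.1 fun h =>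
      (hvars i (support_subset_vars_of_mem_support he' h)).not_ge hi
  have hextract : ∀ x : Fin (n + 1) → ZMod p,
      ∑ b : Fin (n + 1) → ZMod p,
          (∏ i : Fin (n + 1), dualWeight p (e i) (b i)) * inducedOp p n f (b * x) =
        coeff e f * ∏ i : Fin (n + 1), x i ^ e i := by
    intro x
    simp only [inducedOp_eq_sum hvars, Finset.mul_sum]
    rw [Finset.sum_comm]
    calc ∑ e' ∈ f.support, ∑ b : Fin (n + 1) → ZMod p,
          (∏ i : Fin (n + 1), dualWeight p (e i) (b i)) * (coeff e' f * ∏ i, (b * x) i ^ e' i)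
        = ∑ e' ∈ f.support, coeff e' f * (∏ i : Fin (n + 1), x i ^ e' i) *
            ∏ i : Fin (n + 1), ∑ β : ZMod p, dualWeight p (e i) β * β ^ e' i := by
          refine Finset.sum_congr rfl fun e' _ => ?_
          rw [Fintype.prod_sum, Finset.mul_sum]
          refine Finset.sum_congr rfl fun b _ => ?_
          simp only [Pi.mul_apply, mul_pow, Finset.prod_mul_distrib]
          ring
      _ = coeff e f * ∏ i : Fin (n + 1), x i ^ e i := by
          rw [Finset.sum_congr rfl fun e' he' => by
              rw [prod_sum_dualWeight_mul_pow (hred e he) (hred e' he') (hsupp e he)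
                (hsupp e' he')],
            Finset.sum_eq_single_of_mem e he fun e' _ hne => by rw [if_neg hne, mul_zero],
            if_pos rfl, mul_one]
  have hsum : (∑ b : Fin (n + 1) → ZMod p, (∏ i : Fin (n + 1), dualWeight p (e i) (b i)) •
      fun x => inducedOp p n f (b * x)) ∈ hC.nAry n :=
    Submodule.sum_mem _ fun b _ =>
      Submodule.smul_mem _ _ (hC.comp_linearMap hf (LinearMap.mulLeft (ZMod p) b))
  refine Ops.mk_mem_of_eq (hC.smul_mem hsum (coeff e f)⁻¹) fun x => ?_
  simp only [Pi.smul_apply, Finset.sum_apply, smul_eq_mul, hextract,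
    inv_mul_cancel_left₀ (mem_support_iff.1 he)]

end IsLCC

theorem Fintype.prod_comp_eq_prod_pow_card {ι κ M : Type*} [Fintype ι] [Fintype κ] [DecidableEq κ]
    [CommMonoid M] (σ : ι → κ) (x : κ → M) : ∏ j, x (σ j) = ∏ i, x i ^ #{j | σ j = i} := by
  rw [← Finset.prod_fiberwise' univ σ x]
  simp only [prod_const]

theorem Fin.exists_card_fiber_eq {n : ℕ} (e : Fin n → ℕ) :
    ∃ σ : Fin (∑ i, e i) → Fin n, ∀ i, #{j | σ j = i} = e i := by
  refine ⟨fun j => (finSigmaFinEquiv.symm j).1, fun i => ?_⟩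
  rw [← Fintype.card_subtype, ← Fintype.card_fin (e i)]
  exact Fintype.card_congr
    ((finSigmaFinEquiv.symm.subtypeEquiv fun _ => Iff.rfl).trans (Equiv.sigmaSubtype i))

theorem Finsupp.exists_card_fiber_eq {n : ℕ} {e : ℕ →₀ ℕ} (he : ∀ i ∈ e.support, i < n + 1) :
    ∃ σ : Fin (e.sum fun _ k => k) → Fin (n + 1), ∀ i, #{j | σ j = i} = e i := by
  rw [Finsupp.sum_eq_sum_fin he (fun _ k => k) fun _ => rfl]
  exact Fin.exists_card_fiber_eq fun i => e i

section SplitOff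

variable {d m : ℕ} (τ : Fin d → Fin (m + 1)) (j₀ : Fin d)

/-- `τ` with position `j₀` sent to a new variable. -/
def splitOff : Fin d → Fin (m + 2) := Function.update (Fin.castSucc ∘ τ) j₀ (Fin.last (m + 1))

theorem splitOff_self : splitOff τ j₀ j₀ = Fin.last (m + 1) := Function.update_self _ _ _

theorem splitOff_of_ne {j : Fin d} (h : j ≠ j₀) : splitOff τ j₀ j = Fin.castSucc (τ j) :=
  Function.update_of_ne h _ _

theorem card_image_splitOff {j₁ : Fin d} (hne : j₁ ≠ j₀) (heq : τ j₁ = τ j₀) :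
    #(univ.image (splitOff τ j₀)) = #(univ.image τ) + 1 := by
  classical
  have himage : univ.image (splitOff τ j₀) =
      insert (Fin.last (m + 1)) ((univ.image τ).image Fin.castSucc) := by
    ext v
    simp only [mem_image, mem_insert, mem_univ, true_and]
    constructor
    · rintro ⟨j, rfl⟩
      by_cases hj : j = j₀
      · exact .inl (hj ▸ splitOff_self τ j₀)
      · exact .inr ⟨τ j, ⟨j, rfl⟩, (splitOff_of_ne τ j₀ hj).symm⟩
    · rintro (rfl | ⟨_, ⟨j, rfl⟩, rfl⟩)
      · exact ⟨j₀, splitOff_self τ j₀⟩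
      · by_cases hj : j = j₀
        · exact ⟨j₁, by rw [splitOff_of_ne τ j₀ hne, heq, hj]⟩
        · exact ⟨j, splitOff_of_ne τ j₀ hj⟩
  rw [himage, card_insert_of_notMem (by simp [Fin.castSucc_ne_last]),
    card_image_of_injective _ (Fin.castSucc_injective _)]

theorem card_filter_splitOff_le {N : ℕ} (hN : 1 ≤ N) (hτ : ∀ i, #{j | τ j = i} ≤ N)
    (v : Fin (m + 2)) : #{j | splitOff τ j₀ j = v} ≤ N := by
  classical
  induction v using Fin.lastCases with
  | last =>
    refine (card_le_card fun j hj => mem_singleton.2 (by_contra fun hne => ?_)).trans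
      (card_singleton j₀ ▸ hN)
    rw [mem_filter, splitOff_of_ne τ j₀ hne] at hj
    exact Fin.castSucc_ne_last _ hj.2
  | cast i =>
    refine (card_le_card fun j hj => ?_).trans (hτ i)
    rw [mem_filter] at hj ⊢
    by_cases hne : j = j₀
    · rw [hne, splitOff_self] at hj
      exact absurd hj.2.symm (Fin.castSucc_ne_last i)
    · rw [splitOff_of_ne τ j₀ hne, Fin.castSucc_inj] at hj
      exact hj

theorem prod_add_ite_eq {R : Type*} [CommSemiring R] (a : Fin (m + 1) → R) (b : R) :
    ∏ j, (a (τ j) + if τ j = τ j₀ then b else 0) =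
      (a (τ j₀) + b) ^ #{j | τ j = τ j₀} * ∏ j with τ j ≠ τ j₀, a (τ j) := by
  rw [← prod_filter_mul_prod_filter_not univ (fun j => τ j = τ j₀), ← prod_const]
  congr 1
  · exact prod_congr rfl fun j hj => by rw [(mem_filter.1 hj).2, if_pos rfl]
  · exact prod_congr rfl fun j hj => by rw [if_neg (mem_filter.1 hj).2, add_zero]

theorem prod_splitOff {M : Type*} [CommMonoid M] (x : Fin (m + 2) → M) :
    ∏ j, x (splitOff τ j₀ j) = x (Fin.last (m + 1)) * x (Fin.castSucc (τ j₀)) ^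
      (#{j | τ j = τ j₀} - 1) * ∏ j with τ j ≠ τ j₀, x (Fin.castSucc (τ j)) := by
  classical
  have hj₀ : j₀ ∈ ({j | τ j = τ j₀} : Finset (Fin d)) := mem_filter.2 ⟨mem_univ _, rfl⟩
  rw [← prod_filter_mul_prod_filter_not univ (fun j => τ j = τ j₀)]
  congr 1
  · simp_rw [splitOff, Function.apply_update (fun _ => x), prod_update_of_mem hj₀]
    rw [prod_congr rfl (g := fun _ => x (Fin.castSucc (τ j₀))) fun j hj => by
        rw [Function.comp_apply, (mem_filter.1 (mem_sdiff.1 hj).1).2], prod_const,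
      card_sdiff_of_subset (singleton_subset_iff.2 hj₀), card_singleton]
  · exact prod_congr rfl fun j hj => by
      rw [splitOff_of_ne τ j₀ fun h => (mem_filter.1 hj).2 (congrArg τ h)]

end SplitOff

def monomialDegrees {p : ℕ} (C : Set (Ops (ZMod p))) : Set ℕ :=
  {d | ∀ (m : ℕ) (τ : Fin d → Fin (m + 1)), (⟨m, fun x => ∏ j, x (τ j)⟩ : Ops (ZMod p)) ∈ C}

theorem isPMinor_monomialDegrees {p : ℕ} [Fact p.Prime] (C : Set (Ops (ZMod p))) :
    IsPMinor p (monomialDegrees C) := by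
  have hp := (Fact.out : p.Prime).one_le
  intro d hd hdp
  obtain ⟨d', rfl⟩ : ∃ d', d = d' + 1 + (p - 1) := ⟨d - p, by omega⟩
  rw [Nat.add_sub_cancel]
  intro m τ
  -- repeating the first variable `p - 1` more times does not change the product, as `a ^ p = a`
  refine Ops.mk_mem_of_eq (hd m (Fin.append τ fun _ => τ 0)) fun x => ?_
  rw [Fin.prod_univ_add, Fin.prod_univ_succ, Fin.prod_univ_succ]
  simp only [Fin.append_left, Fin.append_right, prod_const, card_univ, Fintype.card_fin]
  rw [mul_comm, ← mul_assoc, ← pow_succ, Nat.sub_add_cancel hp, ZMod.pow_card]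

theorem IsLCC.mem_monomialDegrees_of_injective {p : ℕ} {C : Set (Ops (ZMod p))} (hC : IsLCC p C)
    {d m : ℕ} {τ : Fin d → Fin (m + 1)}
    (hτ : Function.Injective τ) (hmem : (⟨m, fun x => ∏ j, x (τ j)⟩ : Ops (ZMod p)) ∈ C) :
    d ∈ monomialDegrees C := fun _ τ' =>
  Ops.mk_mem_of_eq (hC.comp_map hmem (Function.extend τ τ' 0)) fun x => by
    simp [hτ.extend_apply]

namespace IsLCC

variable {p : ℕ} [Fact p.Prime] {C : Set (Ops (ZMod p))}

/-- Substituting `x ↦ x + t y` for the variable `x = x (τ j₀)` and extracting the coefficient of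
`t` turns `x ^ k` into `k x ^ (k - 1) y`; here `k ≠ 0` in `ZMod p` as `1 ≤ k ≤ p - 1`. -/
theorem prod_splitOff_mem (hC : IsLCC p C) {d m : ℕ} {τ : Fin d → Fin (m + 1)} {j₀ : Fin d}
    (hk : #{j | τ j = τ j₀} ≤ p - 1) (hmem : (⟨m, fun x => ∏ j, x (τ j)⟩ : Ops (ZMod p)) ∈ C) :
    (⟨m + 1, fun x => ∏ j, x (splitOff τ j₀ j)⟩ : Ops (ZMod p)) ∈ C := by
  classical
  set k := #{j | τ j = τ j₀}
  have hsubst : ∀ t : ZMod p,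
      (fun x => (x (Fin.castSucc (τ j₀)) + t * x (Fin.last (m + 1))) ^ k *
        ∏ j with τ j ≠ τ j₀, x (Fin.castSucc (τ j))) ∈ hC.nAry (m + 1) := fun t =>
    Ops.mk_mem_of_eq (hC.comp_linearMap hmem (LinearMap.funLeft _ _ Fin.castSucc +
      t • (LinearMap.single (ZMod p) _ (τ j₀) ∘ₗ LinearMap.proj (Fin.last (m + 1)))))
      fun x => by simpa [Pi.single_apply] using prod_add_ite_eq τ j₀ (x ∘ Fin.castSucc) _
  have hsum := Submodule.sum_mem (hC.nAry (m + 1)) fun t (_ : t ∈ univ) =>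
    Submodule.smul_mem _ (dualWeight p 1 t) (hsubst t)
  have hk0 : (k : ZMod p) ≠ 0 := by
    rw [Ne, ZMod.natCast_eq_zero_iff]
    intro h
    have := Nat.le_of_dvd (card_pos.2 ⟨j₀, mem_filter.2 ⟨mem_univ _, rfl⟩⟩ : 0 < k) h
    have := (Fact.out : p.Prime).two_le
    omega
  refine Ops.mk_mem_of_eq (hC.smul_mem hsum (k : ZMod p)⁻¹) fun x => ?_
  simp only [Pi.smul_apply, Finset.sum_apply, smul_eq_mul, ← mul_assoc, ← Finset.sum_mul,
    sum_dualWeight_one_mul_add_pow hk, prod_splitOff, inv_mul_cancel_left₀ hk0]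
  ring

theorem mem_monomialDegrees (hC : IsLCC p C) {d m : ℕ} (τ : Fin d → Fin (m + 1))
    (hτ : ∀ i, #{j | τ j = i} ≤ p - 1) (hmem : (⟨m, fun x => ∏ j, x (τ j)⟩ : Ops (ZMod p)) ∈ C) :
    d ∈ monomialDegrees C := by
  induction h : d - #(univ.image τ) using Nat.strong_induction_on generalizing m with
  | _ k IH =>
  by_cases hinj : Function.Injective τ
  · exact hC.mem_monomialDegrees_of_injective hinj hmem
  obtain ⟨j₁, j₀, heq, hne⟩ : ∃ j₁ j₀, τ j₁ = τ j₀ ∧ j₁ ≠ j₀ := by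
    simpa [Function.Injective] using hinj
  have himage := card_image_splitOff τ j₀ hne heq
  have hle : #(univ.image τ) + 1 ≤ d := by
    simpa [himage] using card_image_le (s := univ) (f := splitOff τ j₀)
  exact IH _ (by omega) _
    (card_filter_splitOff_le τ j₀ (by have := (Fact.out : p.Prime).two_le; omega) hτ)
    (hC.prod_splitOff_mem (hτ _) hmem) rfl

theorem subset_CM (hC : IsLCC p C) : C ⊆ CM p (monomialDegrees C) := by
  classical
  rintro ⟨n, g⟩ hg
  obtain ⟨f, hred, hvars, rfl⟩ := exists_reduced_inducedOp_eq n g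
  by_cases hf0 : f = 0
  · exact .inl ⟨n, by rw [hf0]; exact congrArg (Sigma.mk n) (funext fun _ => map_zero _)⟩
  refine .inr ⟨n, f, hf0, hred, hvars, fun e he => ?_, rfl⟩
  obtain ⟨σ, hσ⟩ := Finsupp.exists_card_fiber_eq (n := n) fun i hi =>
    hvars i (support_subset_vars_of_mem_support he hi)
  refine hC.mem_monomialDegrees σ (fun i => (hσ i).trans_le (hred e he i)) ?_
  exact Ops.mk_mem_of_eq (hC.monomial_mem hred hvars hg he) fun x => by
    simp only [Fintype.prod_comp_eq_prod_pow_card, hσ]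

theorem CM_subset (hC : IsLCC p C) : CM p (monomialDegrees C) ⊆ C := by
  classical
  rintro _ (⟨n, rfl⟩ | ⟨n, f, -, -, hvars, hdeg, rfl⟩)
  · exact hC.zero_mem n
  have hmono : ∀ e ∈ f.support, (fun x => ∏ i : Fin (n + 1), x i ^ e i) ∈ hC.nAry n := by
    intro e he
    obtain ⟨σ, hσ⟩ := Finsupp.exists_card_fiber_eq (n := n) fun i hi =>
      hvars i (support_subset_vars_of_mem_support he hi)
    exact Ops.mk_mem_of_eq (hdeg e he n σ) fun x => by
      simp only [Fintype.prod_comp_eq_prod_pow_card, hσ]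
  refine Ops.mk_mem_of_eq (Submodule.sum_mem (hC.nAry n) fun e he =>
    Submodule.smul_mem _ (coeff e f) (hmono e he)) fun x => ?_
  simp [inducedOp_eq_sum hvars]

end IsLCC

/-- For every linearly closed clonoid `C` on `ZMod p`, there exists a
`p`-minor subset `M` with `C = 𝒞(M)` (surjectivity of `𝒞`). -/
theorem statement12 (p : ℕ) (hp : p.Prime) (C : Set (Ops (ZMod p))) (hC : IsLCC p C) :
    ∃ M : Set ℕ, IsPMinor p M ∧ C = CM p M :=
  haveI : Fact p.Prime := ⟨hp⟩
  ⟨monomialDegrees C, isPMinor_monomialDegrees C, hC.subset_CM.antisymm hC.CM_subset⟩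
end

section
/- Let p be a prime and let C be a clone on Z_p which contains +. Assume that C is not contained in Aff(Z_p) and that some operation of C does not preserve the unary relation {0} (i.e., there is f ∈ C with f(0,…,0) ≠ 0). Then C contains all finitary operations on Z_p. -/
/-!
Because `+ ∈ C`, the `m`-ary operations of `C` form a `ZMod p`-subspace. Composing an operation
with `f (0, …, 0) ≠ 0` with zeros gives a nonzero constant, hence all constants, so `C` contains
every affine operation. Restricting a non-affine `F ∈ C` to a plane and taking a second difference
gives a nonzero binary `m ∈ C` vanishing on both axes. The difference operator
`Δ g x = g (x + 1) - g x` satisfies `Δ ^ p = 0`, so iterating it, first in `x` and then in `y`,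
brings `m` down to `c * x * y` with `c ≠ 0`. With constants, `+` and `*`, the clone contains every
polynomial function, and every function on `ZMod p` is polynomial.
-/

theorem Module.End.exists_pow_ne_zero_and_pow_succ_eq_zero {R M : Type*} [Semiring R]
    [AddCommMonoid M] [Module R M] {T : Module.End R M} {v : M}
    (hv : v ≠ 0) (hT : ∃ n, (T ^ n) v = 0) : ∃ k, (T ^ k) v ≠ 0 ∧ (T ^ (k + 1)) v = 0 := by
  classical
  obtain ⟨k, hk⟩ : ∃ k, Nat.find hT = k + 1 :=
    Nat.exists_eq_succ_of_ne_zero fun h => hv (by simpa [h] using Nat.find_spec hT)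
  exact ⟨k, Nat.find_min hT (by omega), hk ▸ Nat.find_spec hT⟩

namespace ZMod

variable {p : ℕ} {β : Type*} [AddCommGroup β] [Module (ZMod p) β]

theorem apply_eq_add_smul_of_sub_eq [NeZero p] {h : ZMod p → β} {c : β}
    (hc : ∀ x, h (x + 1) - h x = c) (x : ZMod p) : h x = h 0 + x • c := by
  suffices ∀ n : ℕ, h n = h 0 + (n : ZMod p) • c by simpa using this x.val
  intro n
  induction n with
  | zero => simp
  | succ n ih =>
    rw [Nat.cast_succ, sub_eq_iff_eq_add'.mp (hc n), ih, add_smul, one_smul, add_assoc]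

variable (p β) in
def shiftₗ : Module.End (ZMod p) (ZMod p → β) := LinearMap.funLeft (ZMod p) β (· + 1)

theorem shiftₗ_pow_apply (k : ℕ) (g : ZMod p → β) (x : ZMod p) :
    (shiftₗ p β ^ k) g x = g (x + k) := by
  induction k generalizing g with
  | zero => simp
  | succ k ih =>
    rw [pow_succ, Module.End.mul_apply, ih, Nat.cast_succ, ← add_assoc]
    simp [shiftₗ]

variable (p β) in
def fdiffₗ : Module.End (ZMod p) (ZMod p → β) := shiftₗ p β - 1

@[simp]
theorem fdiffₗ_apply (h : ZMod p → β) (x : ZMod p) : fdiffₗ p β h x = h (x + 1) - h x := rfl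

theorem fdiffₗ_pow_card [Fact p.Prime] : fdiffₗ p β ^ p = 0 := by
  have hX : ((Polynomial.X - 1 : Polynomial (ZMod p)) ^ p) = Polynomial.X ^ p - 1 := by
    rw [sub_pow_char, one_pow]
  have hσ : shiftₗ p β ^ p = 1 := by
    ext g x
    simp [shiftₗ_pow_apply]
  simpa [fdiffₗ, hσ] using congrArg (Polynomial.aeval (shiftₗ p β)) hX

/-- If `g ∈ W` is not constant, the last nonzero iterated difference `h = Δᵏ g` (it exists since
`Δ` is nilpotent) has constant difference `c ≠ 0`, so `x • c = h x - h 0` lies in `W`. -/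
theorem exists_smul_mem_of_shift_mem [Fact p.Prime] {W : Submodule (ZMod p) (ZMod p → β)}
    (hshift : ∀ g ∈ W, (fun x => g (x + 1)) ∈ W) (hconst : ∀ g ∈ W, (fun _ => g 0) ∈ W)
    {g : ZMod p → β} (hg : g ∈ W) {x₀ : ZMod p} (hx₀ : g x₀ ≠ g 0) :
    ∃ c ≠ 0, (fun x => x • c) ∈ W := by
  have hΔW : ∀ k, (fdiffₗ p β ^ k) g ∈ W := by
    intro k
    induction k with
    | zero => exact hg
    | succ k ih => rw [pow_succ', Module.End.mul_apply]; exact W.sub_mem (hshift _ ih) ih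
  have hΔg : fdiffₗ p β g ≠ 0 := fun h0 =>
    hx₀ (by simpa using apply_eq_add_smul_of_sub_eq (c := 0) (fun x => congrFun h0 x) x₀)
  obtain ⟨k, hk, hk'⟩ := Module.End.exists_pow_ne_zero_and_pow_succ_eq_zero hΔg
    ⟨p, by rw [fdiffₗ_pow_card, LinearMap.zero_apply]⟩
  rw [← Module.End.mul_apply, ← pow_succ, pow_succ', Module.End.mul_apply] at hk hk'
  rw [pow_succ', Module.End.mul_apply] at hk'
  have hW := hΔW k
  generalize (fdiffₗ p β ^ k) g = h at hk hk' hW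
  have hc : ∀ x, fdiffₗ p β h x = fdiffₗ p β h 0 := fun x => by
    simpa using
      apply_eq_add_smul_of_sub_eq (h := fdiffₗ p β h) (c := 0) (fun x => congrFun hk' x) x
  refine ⟨fdiffₗ p β h 0, fun hc0 => hk (funext fun x => (hc x).trans hc0), ?_⟩
  convert W.sub_mem hW (hconst h hW) using 1
  funext x
  rw [Pi.sub_apply, apply_eq_add_smul_of_sub_eq (fun x => (fdiffₗ_apply h x).symm.trans (hc x)) x]
  abel

end ZMod

theorem mem_affOps_of_forall_sub_add_eq {p n : ℕ} {f : (Fin (n + 1) → ZMod p) → ZMod p}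
    (hf : ∀ u a b, f (a + u) - f a = f (b + u) - f b) : (⟨n, f⟩ : Ops (ZMod p)) ∈ AffOps p := by
  let G : (Fin (n + 1) → ZMod p) →+ ZMod p :=
    AddMonoidHom.mk' (fun x => f x - f 0) fun x y => by
      have := hf y x 0
      rw [zero_add] at this
      linear_combination this
  refine ⟨n, f 0, fun i => G.toZModLinearMap p fun j => if i = j then 1 else 0, ?_⟩
  congr 1
  funext x
  have := (G.toZModLinearMap p).pi_apply_eq_sum_univ x
  simp only [smul_eq_mul, mul_comm (x _)] at this
  rw [← this]
  exact (add_sub_cancel (f 0) (f x)).symm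

namespace IsClone

section Clone

variable {A : Type} {C : Set (Ops A)}

theorem comp_mem (hC : IsClone C) {n m : ℕ} {f : (Fin (n + 1) → A) → A}
    {g : Fin (n + 1) → (Fin (m + 1) → A) → A} (hf : ⟨n, f⟩ ∈ C) (hg : ∀ i, ⟨m, g i⟩ ∈ C) :
    (⟨m, fun x => f fun i => g i x⟩ : Ops A) ∈ C :=
  hC.2 ⟨n, m, f, g, hf, hg, rfl⟩

theorem comp₂_mem (hC : IsClone C) {op : A → A → A} (hop : ⟨1, fun v => op (v 0) (v 1)⟩ ∈ C)
    {m : ℕ} {f g : (Fin (m + 1) → A) → A} (hf : ⟨m, f⟩ ∈ C) (hg : ⟨m, g⟩ ∈ C) :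
    (⟨m, fun x => op (f x) (g x)⟩ : Ops A) ∈ C :=
  hC.comp_mem hop (g := ![f, g]) (Fin.forall_fin_two.mpr ⟨hf, hg⟩)

theorem add_mem [Add A] (hC : IsClone C) (hplus : plusOp A ∈ C) {m : ℕ}
    {f g : (Fin (m + 1) → A) → A} (hf : ⟨m, f⟩ ∈ C) (hg : ⟨m, g⟩ ∈ C) :
    (⟨m, f + g⟩ : Ops A) ∈ C :=
  hC.comp₂_mem hplus hf hg

theorem nsmul_succ_mem [AddMonoid A] (hC : IsClone C) (hplus : plusOp A ∈ C) {m : ℕ}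
    {f : (Fin (m + 1) → A) → A} (hf : ⟨m, f⟩ ∈ C) (n : ℕ) :
    (⟨m, (n + 1) • f⟩ : Ops A) ∈ C := by
  induction n with
  | zero => simpa using hf
  | succ n ih => rw [succ_nsmul]; exact hC.add_mem hplus ih hf

end Clone

variable {p : ℕ} {C : Set (Ops (ZMod p))}

theorem smul_mem [NeZero p] (hC : IsClone C) (hplus : plusOp (ZMod p) ∈ C) {m : ℕ}
    {f : (Fin (m + 1) → ZMod p) → ZMod p} (hf : ⟨m, f⟩ ∈ C) (k : ZMod p) :
    (⟨m, k • f⟩ : Ops (ZMod p)) ∈ C := by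
  have hk : ((k.val + p - 1 + 1 : ℕ) : ZMod p) = k := by
    rw [Nat.sub_add_cancel (by have := NeZero.pos p; omega)]
    simp
  rw [← hk, Nat.cast_smul_eq_nsmul]
  exact hC.nsmul_succ_mem hplus hf _

def opsSubmodule [NeZero p] (hC : IsClone C) (hplus : plusOp (ZMod p) ∈ C) (m : ℕ) :
    Submodule (ZMod p) ((Fin (m + 1) → ZMod p) → ZMod p) where
  carrier := {f | (⟨m, f⟩ : Ops (ZMod p)) ∈ C}
  add_mem' := hC.add_mem hplus
  zero_mem' := by simpa using hC.smul_mem hplus (hC.1 m 0) 0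
  smul_mem' k _ hf := hC.smul_mem hplus hf k

theorem const_mem [Fact p.Prime] (hC : IsClone C) (hplus : plusOp (ZMod p) ∈ C)
    (h0 : ∃ h ∈ C, ¬ Preserves0 h) (m : ℕ) (b : ZMod p) :
    (⟨m, fun _ => b⟩ : Ops (ZMod p)) ∈ C := by
  obtain ⟨⟨n, F⟩, hF, hF0⟩ := h0
  have hc : (⟨m, fun _ => F fun _ => 0⟩ : Ops (ZMod p)) ∈ C :=
    hC.comp_mem hF fun _ => (hC.opsSubmodule hplus m).zero_mem
  convert hC.smul_mem hplus hc (b * (F fun _ => 0)⁻¹) using 3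
  simp [inv_mul_cancel_right₀ hF0]

def binOps [NeZero p] (hC : IsClone C) (hplus : plusOp (ZMod p) ∈ C) :
    Submodule (ZMod p) (ZMod p → ZMod p → ZMod p) where
  carrier := {m | (fun v : Fin 2 → ZMod p => m (v 0) (v 1)) ∈ hC.opsSubmodule hplus 1}
  add_mem' := (hC.opsSubmodule hplus 1).add_mem
  zero_mem' := (hC.opsSubmodule hplus 1).zero_mem
  smul_mem' k _ := (hC.opsSubmodule hplus 1).smul_mem k

section binOps

variable (hC : IsClone C) (hplus : plusOp (ZMod p) ∈ C)

section NeZero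

variable [NeZero p]

theorem fst_mem_binOps : (fun x _ => x) ∈ hC.binOps hplus := hC.1 1 0

theorem snd_mem_binOps : (fun _ y => y) ∈ hC.binOps hplus := hC.1 1 1

theorem comp_mem_binOps {m a b : ZMod p → ZMod p → ZMod p} (hm : m ∈ hC.binOps hplus)
    (ha : a ∈ hC.binOps hplus) (hb : b ∈ hC.binOps hplus) :
    (fun x y => m (a x y) (b x y)) ∈ hC.binOps hplus :=
  hC.comp_mem hm (g := ![fun v => a (v 0) (v 1), fun v => b (v 0) (v 1)])
    (Fin.forall_fin_two.mpr ⟨ha, hb⟩)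

theorem affine_mem_binOps (hconst : ∀ m (b : ZMod p), (⟨m, fun _ => b⟩ : Ops (ZMod p)) ∈ C)
    (c a b : ZMod p) : (fun x y => c + a * x + b * y) ∈ hC.binOps hplus :=
  let B := hC.binOps hplus
  B.add_mem (B.add_mem (hconst 1 c) (B.smul_mem a (hC.fst_mem_binOps hplus)))
    (B.smul_mem b (hC.snd_mem_binOps hplus))

theorem exists_mem_binOps_of_not_mem_affOps
    (hconst : ∀ m (b : ZMod p), (⟨m, fun _ => b⟩ : Ops (ZMod p)) ∈ C) {n : ℕ}
    {F : (Fin (n + 1) → ZMod p) → ZMod p} (hF : ⟨n, F⟩ ∈ C) (hFa : ⟨n, F⟩ ∉ AffOps p) :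
    ∃ m ∈ hC.binOps hplus, (∀ x, m x 0 = 0) ∧ m 0 = 0 ∧ m ≠ 0 := by
  obtain ⟨u, a, b, hne⟩ : ∃ u a b, F (a + u) - F a ≠ F (b + u) - F b := by
    by_contra! h
    exact hFa (mem_affOps_of_forall_sub_add_eq h)
  let B := hC.binOps hplus
  let h : ZMod p → ZMod p → ZMod p := fun s t => F fun i => a i + (b i - a i) * s + u i * t
  have hh : h ∈ B := hC.comp_mem hF fun i => hC.affine_mem_binOps hplus hconst _ _ _
  have hh_eval (s t : ZMod p) (v : Fin (n + 1) → ZMod p)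
      (hv : ∀ i, a i + (b i - a i) * s + u i * t = v i) : h s t = F v := by
    simp only [h, hv]
  refine ⟨fun s t => h s t - h s 0 - h 0 t + h 0 0, ?_, fun s => by ring, by ext; simp, ?_⟩
  · refine B.add_mem (B.sub_mem (B.sub_mem hh ?_) ?_) (hconst 1 _)
    · exact hC.comp_mem_binOps hplus hh (hC.fst_mem_binOps hplus) (hconst 1 0)
    · exact hC.comp_mem_binOps hplus hh (hconst 1 0) (hC.snd_mem_binOps hplus)
  · intro h0
    apply hne
    have := congrFun (congrFun h0 1) 1
    rw [hh_eval 1 1 (b + u) (fun i => by simp), hh_eval 1 0 b (fun i => by simp),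
      hh_eval 0 1 (a + u) (fun i => by simp), hh_eval 0 0 a (fun i => by simp)] at this
    simp only [Pi.zero_apply] at this
    linear_combination -this

theorem eval_mem (hconst : ∀ m (b : ZMod p), (⟨m, fun _ => b⟩ : Ops (ZMod p)) ∈ C)
    (hmul : (⟨1, fun v => v 0 * v 1⟩ : Ops (ZMod p)) ∈ C) {m : ℕ}
    (P : MvPolynomial (Fin (m + 1)) (ZMod p)) :
    (fun x => MvPolynomial.eval x P) ∈ hC.opsSubmodule hplus m := by
  induction P using MvPolynomial.induction_on with
  | C a => simp only [MvPolynomial.eval_C]; exact hconst m a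
  | add P Q hP hQ => simp only [map_add]; exact (hC.opsSubmodule hplus m).add_mem hP hQ
  | mul_X P i hP =>
    simp only [map_mul, MvPolynomial.eval_X]
    exact hC.comp₂_mem hmul hP (hC.1 m i)

end NeZero

variable [Fact p.Prime]

theorem exists_mul_left_mem_binOps
    (hconst : ∀ m (b : ZMod p), (⟨m, fun _ => b⟩ : Ops (ZMod p)) ∈ C)
    {m : ZMod p → ZMod p → ZMod p} (hm : m ∈ hC.binOps hplus) (hm0 : ∀ x, m x 0 = 0)
    (h0m : m 0 = 0) (hne : m ≠ 0) :
    ∃ q : ZMod p → ZMod p, q 0 = 0 ∧ q ≠ 0 ∧ (fun x y => x * q y) ∈ hC.binOps hplus := by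
  let B := hC.binOps hplus
  -- the binary operations of `C` vanishing on the line `y = 0`
  let W := B ⊓ Submodule.pi Set.univ fun _ => LinearMap.ker (LinearMap.proj 0)
  obtain ⟨x₀, hx₀⟩ : ∃ x, m x ≠ m 0 := by
    by_contra! h
    exact hne (funext fun x => (h x).trans h0m)
  obtain ⟨q, hq, hqW⟩ := ZMod.exists_smul_mem_of_shift_mem (W := W)
    (fun g hg => ⟨hC.comp_mem_binOps hplus hg.1
      (B.add_mem (hC.fst_mem_binOps hplus) (hconst 1 1)) (hC.snd_mem_binOps hplus),
      fun x _ => hg.2 (x + 1) trivial⟩)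
    (fun g hg => ⟨hC.comp_mem_binOps hplus hg.1 (hconst 1 0) (hC.snd_mem_binOps hplus),
      fun _ _ => hg.2 0 trivial⟩)
    ⟨hm, fun x _ => hm0 x⟩ hx₀
  exact ⟨q, by simpa using hqW.2 1 trivial, hq, hqW.1⟩

theorem mul_mem_binOps_of_mul_left
    (hconst : ∀ m (b : ZMod p), (⟨m, fun _ => b⟩ : Ops (ZMod p)) ∈ C)
    {q : ZMod p → ZMod p} (hq : (fun x y => x * q y) ∈ hC.binOps hplus) (hq0 : q 0 = 0)
    (hne : q ≠ 0) : (fun x y => x * y) ∈ hC.binOps hplus := by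
  let B := hC.binOps hplus
  -- `r ∈ W` iff `(x, y) ↦ x * r y` is in `B`
  let W := B.comap (LinearMap.pi fun x : ZMod p => x • LinearMap.id)
  obtain ⟨y₀, hy₀⟩ : ∃ y, q y ≠ q 0 := by
    by_contra! h
    exact hne (funext fun y => (h y).trans hq0)
  obtain ⟨c, hc, hcW⟩ := ZMod.exists_smul_mem_of_shift_mem (W := W)
    (fun r hr => hC.comp_mem_binOps hplus (m := fun x y => x * r y) (b := fun _ y => y + 1) hr
      (hC.fst_mem_binOps hplus) (B.add_mem (hC.snd_mem_binOps hplus) (hconst 1 1)))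
    (fun r hr => hC.comp_mem_binOps hplus (m := fun x y => x * r y) (b := fun _ _ => 0) hr
      (hC.fst_mem_binOps hplus) (hconst 1 0))
    hq hy₀
  convert B.smul_mem c⁻¹ hcW using 1
  ext x y
  simp [mul_left_comm, hc]

end binOps

theorem mul_mem [Fact p.Prime] (hC : IsClone C) (hplus : plusOp (ZMod p) ∈ C)
    (hconst : ∀ m (b : ZMod p), (⟨m, fun _ => b⟩ : Ops (ZMod p)) ∈ C)
    (haff : ¬ C ⊆ AffOps p) : (⟨1, fun v => v 0 * v 1⟩ : Ops (ZMod p)) ∈ C := by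
  obtain ⟨⟨n, F⟩, hF, hFa⟩ := Set.not_subset.mp haff
  obtain ⟨m, hm, hm0, h0m, hne⟩ := hC.exists_mem_binOps_of_not_mem_affOps hplus hconst hF hFa
  obtain ⟨q, hq0, hqne, hq⟩ := hC.exists_mul_left_mem_binOps hplus hconst hm hm0 h0m hne
  exact hC.mul_mem_binOps_of_mul_left hplus hconst hq hq0 hqne

theorem eq_univ_of_mul_mem [Fact p.Prime] (hC : IsClone C) (hplus : plusOp (ZMod p) ∈ C)
    (hconst : ∀ m (b : ZMod p), (⟨m, fun _ => b⟩ : Ops (ZMod p)) ∈ C)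
    (hmul : (⟨1, fun v => v 0 * v 1⟩ : Ops (ZMod p)) ∈ C) : C = Set.univ := by
  refine Set.eq_univ_of_forall fun ⟨m, f⟩ => ?_
  have hf : f ∈ (MvPolynomial.restrictDegree (Fin (m + 1)) (ZMod p) (p - 1)).map
      (MvPolynomial.evalₗ (ZMod p) (Fin (m + 1))) := by
    simpa using (MvPolynomial.map_restrict_dom_evalₗ (ZMod p) (Fin (m + 1))).ge trivial
  obtain ⟨P, -, rfl⟩ := Submodule.mem_map.mp hf
  exact hC.eval_mem hplus hconst hmul P

end IsClone

/-- Let `C` be a clone on `ZMod p` containing `+`, not contained in the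
affine operations, and containing some operation that does not preserve `{0}`. Then `C`
contains all finitary operations on `ZMod p`. -/
theorem statement16 (p : ℕ) (hp : p.Prime) (C : Set (Ops (ZMod p)))
    (hC : IsClone C) (hplus : plusOp (ZMod p) ∈ C) (haff : ¬ C ⊆ AffOps p)
    (h0 : ∃ h ∈ C, ¬ Preserves0 h) :
    C = Set.univ := by
  have : Fact p.Prime := ⟨hp⟩
  have hconst := hC.const_mem hplus h0
  exact hC.eq_univ_of_mul_mem hplus hconst (hC.mul_mem hplus hconst haff)
end

section
/- Let p be a prime and let C, D be linearly closed clonoids on Z_p. Define φ(C) := { ((x_1,y_1),…,(x_n,y_n)) ↦ (l_1(x_1,…,x_n) + f(y_1,…,y_n), l_2(y_1,…,y_n)) : n ∈ ℕ, l_1, l_2 ∈ Lin(Z_p) n-ary, f ∈ C n-ary }. Then φ(C) is a clone on Z_p × Z_p containing the componentwise addition ⊕, and C ⊆ D if and only if φ(C) ⊆ φ(D). -/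
/-!
Every member of `φ(C)` has the shape `(x, y) ↦ (a ⬝ x + f y, b ⬝ y)` with `f ∈ C`. Substituting
such operations `(Aᵢ ⬝ x + gᵢ y, Bᵢ ⬝ y)` into one of them gives
`(x, y) ↦ ((a A) ⬝ x + (Σ aᵢ gᵢ y + f (B y)), (b B) ⬝ y)`, and the bracket lies in `C` because a
linearly closed clonoid is closed under linear combinations and under linear substitutions.
Projections and `⊕` arise with `f = 0`. Finally `f` is read off a member of `φ(C)` by putting
`x = 0`, so `φ` reflects inclusion.
-/

open Matrix

section LinearlyClosedClonoid

variable {p : ℕ} {C : Set (Ops (ZMod p))}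

lemma dotProduct_mem_linOps (n : ℕ) (a : Fin (n + 1) → ZMod p) :
    (⟨n, fun x => a ⬝ᵥ x⟩ : Ops (ZMod p)) ∈ LinOps p :=
  ⟨n, a, rfl⟩

lemma IsLCC.dotProduct_comp_mem (hC : IsLCC p C) {n m : ℕ} (a : Fin (n + 1) → ZMod p)
    (g : Fin (n + 1) → (Fin (m + 1) → ZMod p) → ZMod p) (hg : ∀ i, (⟨m, g i⟩ : Ops (ZMod p)) ∈ C) :
    (⟨m, fun x => a ⬝ᵥ fun i => g i x⟩ : Ops (ZMod p)) ∈ C :=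
  hC.2.1 ⟨n, m, _, g, dotProduct_mem_linOps n a, hg, rfl⟩

lemma IsLCC.comp_mulVec_mem (hC : IsLCC p C) {n m : ℕ} {f : (Fin (n + 1) → ZMod p) → ZMod p}
    (hf : (⟨n, f⟩ : Ops (ZMod p)) ∈ C) (B : Matrix (Fin (n + 1)) (Fin (m + 1)) (ZMod p)) :
    (⟨m, fun x => f (B *ᵥ x)⟩ : Ops (ZMod p)) ∈ C :=
  hC.2.2 ⟨n, m, f, fun i x => B i ⬝ᵥ x, hf, fun i => dotProduct_mem_linOps m (B i), rfl⟩

lemma IsLCC.zero_mem_s19 (hC : IsLCC p C) (n : ℕ) :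
    (⟨n, fun _ => 0⟩ : Ops (ZMod p)) ∈ C := by
  obtain ⟨⟨m, g⟩, hg⟩ := hC.1
  have hzero : (⟨m, fun _ => 0⟩ : Ops (ZMod p)) ∈ C := by
    convert hC.dotProduct_comp_mem (n := 0) 0 (fun _ => g) (fun _ => hg) using 3
    simp
  exact hC.comp_mulVec_mem hzero (0 : Matrix (Fin (m + 1)) (Fin (n + 1)) (ZMod p))

lemma IsLCC.add_mem_s19 (hC : IsLCC p C) {m : ℕ} {f g : (Fin (m + 1) → ZMod p) → ZMod p}
    (hf : (⟨m, f⟩ : Ops (ZMod p)) ∈ C) (hg : (⟨m, g⟩ : Ops (ZMod p)) ∈ C) :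
    (⟨m, fun x => f x + g x⟩ : Ops (ZMod p)) ∈ C := by
  convert hC.dotProduct_comp_mem (n := 1) (fun _ => 1) ![f, g] (Fin.forall_fin_two.mpr ⟨hf, hg⟩)
    using 3
  simp [dotProduct, Fin.sum_univ_two]

end LinearlyClosedClonoid

section PhiOp

variable {R : Type*} [CommSemiring R] {ι κ : Type*} [Fintype ι] [Fintype κ]

def phiOp (a b : ι → R) (f : (ι → R) → R) (x : ι → R × R) : R × R :=
  (a ⬝ᵥ (fun i => (x i).1) + f (fun i => (x i).2), b ⬝ᵥ (fun i => (x i).2))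

lemma phiOp_comp (a b : ι → R) (f : (ι → R) → R) (A B : Matrix ι κ R)
    (g : ι → (κ → R) → R) (x : κ → R × R) :
    phiOp a b f (fun i => phiOp (A i) (B i) (g i) x) =
      phiOp (a ᵥ* A) (b ᵥ* B) (fun y => (a ⬝ᵥ fun i => g i y) + f (B *ᵥ y)) x := by
  refine Prod.ext ?_ ?_
  · change a ⬝ᵥ (A *ᵥ (fun j => (x j).1) + fun i => g i (fun j => (x j).2)) +
        f (B *ᵥ fun j => (x j).2) = _
    simp only [phiOp, dotProduct_add, dotProduct_mulVec, add_assoc]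
  · exact dotProduct_mulVec b B _

lemma eq_of_phiOp_eq {a b a' b' : ι → R} {f f' : (ι → R) → R}
    (h : phiOp a b f = phiOp a' b' f') : f = f' := by
  funext y
  simpa [phiOp] using congrArg Prod.fst (congrFun h fun i => (0, y i))

end PhiOp

section PhiMap

variable {p : ℕ} {C D : Set (Ops (ZMod p))}

lemma mem_phiMap_iff {n : ℕ} {F : (Fin (n + 1) → ZMod p × ZMod p) → ZMod p × ZMod p} :
    (⟨n, F⟩ : Ops (ZMod p × ZMod p)) ∈ phiMap p C ↔
      ∃ a b f, (⟨n, f⟩ : Ops (ZMod p)) ∈ C ∧ F = phiOp a b f := by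
  constructor
  · rintro ⟨m, l₁, l₂, f, ⟨_, a, ha⟩, ⟨_, b, hb⟩, hf, hF⟩
    obtain ⟨rfl, hF⟩ := Sigma.mk.inj_iff.mp hF
    obtain ⟨rfl, ha⟩ := Sigma.mk.inj_iff.mp ha
    obtain ⟨rfl, hb⟩ := Sigma.mk.inj_iff.mp hb
    obtain rfl := eq_of_heq ha
    obtain rfl := eq_of_heq hb
    exact ⟨a, b, f, hf, eq_of_heq hF⟩
  · rintro ⟨a, b, f, hf, rfl⟩
    exact ⟨n, _, _, f, dotProduct_mem_linOps n a, dotProduct_mem_linOps n b, hf, rfl⟩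

lemma phiOp_mem_phiMap {n : ℕ} (a b : Fin (n + 1) → ZMod p)
    {f : (Fin (n + 1) → ZMod p) → ZMod p} (hf : (⟨n, f⟩ : Ops (ZMod p)) ∈ C) :
    (⟨n, phiOp a b f⟩ : Ops (ZMod p × ZMod p)) ∈ phiMap p C :=
  mem_phiMap_iff.mpr ⟨a, b, f, hf, rfl⟩

lemma proj_mem_phiMap (hC : IsLCC p C) (n : ℕ) (j : Fin (n + 1)) :
    (⟨n, fun x => x j⟩ : Ops (ZMod p × ZMod p)) ∈ phiMap p C := by
  convert phiOp_mem_phiMap (Pi.single j 1) (Pi.single j 1) (hC.zero_mem_s19 n) using 3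
  simp [phiOp]

lemma plusOp_mem_phiMap (hC : IsLCC p C) :
    plusOp (ZMod p × ZMod p) ∈ phiMap p C := by
  unfold plusOp
  convert phiOp_mem_phiMap (fun _ => 1) (fun _ => 1) (hC.zero_mem_s19 1) using 3
  simp [phiOp, dotProduct, Fin.sum_univ_two, Prod.ext_iff]

lemma opProd_phiMap_subset (hC : IsLCC p C) :
    OpProd (phiMap p C) (phiMap p C) ⊆ phiMap p C := by
  rintro _ ⟨n, m, F, G, hF, hG, rfl⟩
  obtain ⟨a, b, f, hf, rfl⟩ := mem_phiMap_iff.mp hF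
  choose A B g hg hG using fun i => mem_phiMap_iff.mp (hG i)
  simp only [hG, phiOp_comp a b f A B g]
  exact phiOp_mem_phiMap _ _
    (hC.add_mem_s19 (hC.dotProduct_comp_mem a g hg) (hC.comp_mulVec_mem hf B))

lemma isClone_phiMap (hC : IsLCC p C) : IsClone (phiMap p C) :=
  ⟨proj_mem_phiMap hC, opProd_phiMap_subset hC⟩

lemma phiMap_subset_phiMap_iff : phiMap p C ⊆ phiMap p D ↔ C ⊆ D := by
  constructor
  · rintro hCD ⟨n, f⟩ hf
    obtain ⟨_, _, f', hf', heq⟩ :=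
      mem_phiMap_iff.mp (hCD (phiOp_mem_phiMap (C := C) 0 0 hf))
    rwa [eq_of_phiOp_eq heq]
  · rintro hCD _ ⟨n, l₁, l₂, f, hl₁, hl₂, hf, rfl⟩
    exact ⟨n, l₁, l₂, f, hl₁, hl₂, hCD hf, rfl⟩

end PhiMap

theorem statement19_general (p : ℕ) (C D : Set (Ops (ZMod p)))
    (hC : IsLCC p C) :
    IsClone (phiMap p C) ∧ plusOp (ZMod p × ZMod p) ∈ phiMap p C ∧
    (C ⊆ D ↔ phiMap p C ⊆ phiMap p D) :=
  ⟨isClone_phiMap hC, plusOp_mem_phiMap hC, phiMap_subset_phiMap_iff.symm⟩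

/-- For linearly closed clonoids `C, D` on `ZMod p`, the set `φ(C)` is a
clone on `ZMod p × ZMod p` containing the componentwise addition `⊕`, and `C ⊆ D` iff
`φ(C) ⊆ φ(D)`. -/
theorem statement19 (p : ℕ) (hp : p.Prime) (C D : Set (Ops (ZMod p)))
    (hC : IsLCC p C) (hD : IsLCC p D) :
    IsClone (phiMap p C) ∧ plusOp (ZMod p × ZMod p) ∈ phiMap p C ∧
    (C ⊆ D ↔ phiMap p C ⊆ phiMap p D) :=
  statement19_general p C D hC
end
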